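/- arXiv:1809.02465 — 3 statements merged into one kernel-verified Lean document; each statement's English description precedes it below -/
import Mathlib

section
/- In the Bertrand game (all three firms choose prices), the resulting equilibrium outputs are x_A = x_B = (2b²c_C + b·c_C + 3b²c_A - 2b·c_A - 4c_A - 5ab² + ab + 4a)/((1-b)(b+2)(5b+4)) and x_C = (b²c_C - 3b·c_C - 4c_C + 4b²c_A + 2b·c_A - 5ab² + ab + 4a)/((1-b)(b+2)(5b+4)). -/
/-- Direct demand for firm A's good. -/
noncomputable def xdA (a b pA pB pC : ℝ) : ℝ :=
  ((1 - b) * a - (1 + b) * pA + b * (pB + pC)) / ((1 - b) * (1 + 2 * b))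

noncomputable def xdB (a b pA pB pC : ℝ) : ℝ :=
  ((1 - b) * a - (1 + b) * pB + b * (pA + pC)) / ((1 - b) * (1 + 2 * b))

noncomputable def xdC (a b pA pB pC : ℝ) : ℝ :=
  ((1 - b) * a - (1 + b) * pC + b * (pA + pB)) / ((1 - b) * (1 + 2 * b))

/-- Relative profits in the Bertrand (price) game, with c_A = c_B. -/
noncomputable def bpsiA (a b cA cC pA pB pC : ℝ) : ℝ :=
  (pA - cA) * xdA a b pA pB pC -
    ((pB - cA) * xdB a b pA pB pC + (pC - cC) * xdC a b pA pB pC) / 2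

noncomputable def bpsiB (a b cA cC pA pB pC : ℝ) : ℝ :=
  (pB - cA) * xdB a b pA pB pC -
    ((pA - cA) * xdA a b pA pB pC + (pC - cC) * xdC a b pA pB pC) / 2

noncomputable def bpsiC (a b cA cC pA pB pC : ℝ) : ℝ :=
  (pC - cC) * xdC a b pA pB pC -
    ((pA - cA) * xdA a b pA pB pC + (pB - cA) * xdB a b pA pB pC) / 2

/-- Nash equilibrium condition in prices. -/
def BertrandNash (a b cA cC : ℝ) (p : ℝ × ℝ × ℝ) : Prop :=
  (∀ q : ℝ, bpsiA a b cA cC q p.2.1 p.2.2 ≤ bpsiA a b cA cC p.1 p.2.1 p.2.2) ∧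
  (∀ q : ℝ, bpsiB a b cA cC p.1 q p.2.2 ≤ bpsiB a b cA cC p.1 p.2.1 p.2.2) ∧
  (∀ q : ℝ, bpsiC a b cA cC p.1 p.2.1 q ≤ bpsiC a b cA cC p.1 p.2.1 p.2.2)

/-- Equilibrium price of firms A and B. -/
noncomputable def bepAB (a b cA cC : ℝ) : ℝ :=
  (a*(1-b)*(4+5*b) + 3*b*(1+b)*cC + (7*b^2+10*b+4)*cA) / ((5*b+4)*(b+2))

/-- Equilibrium price of firm C. -/
noncomputable def bepC (a b cA cC : ℝ) : ℝ :=
  (a*(1-b)*(5*b+4) + (4*b^2+7*b+4)*cC + 6*b*(b+1)*cA) / ((5*b+4)*(b+2))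

lemma diff_A (a b cA cC pA pB pC q : ℝ) (h1 : (1:ℝ)-b ≠ 0) (h2 : (1:ℝ)+2*b ≠ 0) :
    bpsiA a b cA cC pA pB pC - bpsiA a b cA cC q pB pC =
      (((1-b)*a - 2*(1+b)*pA + b/2*(pB+pC) + (1+b)*cA + b/2*(cA+cC))*(pA-q)
        + (1+b)*(pA-q)^2) / ((1-b)*(1+2*b)) := by
  unfold bpsiA xdA xdB xdC
  field_simp
  ring

lemma diff_B (a b cA cC pA pB pC q : ℝ) (h1 : (1:ℝ)-b ≠ 0) (h2 : (1:ℝ)+2*b ≠ 0) :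
    bpsiB a b cA cC pA pB pC - bpsiB a b cA cC pA q pC =
      (((1-b)*a - 2*(1+b)*pB + b/2*(pA+pC) + (1+b)*cA + b/2*(cA+cC))*(pB-q)
        + (1+b)*(pB-q)^2) / ((1-b)*(1+2*b)) := by
  unfold bpsiB xdA xdB xdC
  field_simp
  ring

lemma diff_C (a b cA cC pA pB pC q : ℝ) (h1 : (1:ℝ)-b ≠ 0) (h2 : (1:ℝ)+2*b ≠ 0) :
    bpsiC a b cA cC pA pB pC - bpsiC a b cA cC pA pB q =
      (((1-b)*a - 2*(1+b)*pC + b/2*(pA+pB) + (1+b)*cC + b*cA)*(pC-q)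
        + (1+b)*(pC-q)^2) / ((1-b)*(1+2*b)) := by
  unfold bpsiC xdA xdB xdC
  field_simp
  ring

/-- Generic best-response characterization for a strictly concave quadratic payoff:
if for all `q`, `f pA - f q = (L*(pA-q) + (1+b)*(pA-q)^2)/D`, then
`pA` maximizes iff `L = 0`. -/
lemma foc_iff {f : ℝ → ℝ} {L pA b D : ℝ} (hb : 0 < 1 + b) (hD : 0 < D)
    (hdiff : ∀ q, f pA - f q = (L*(pA-q) + (1+b)*(pA-q)^2)/D) :
    (∀ q, f q ≤ f pA) ↔ L = 0 := by
  constructor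
  · intro h
    have hq := h (pA + L/(2*(1+b)))
    have hd := hdiff (pA + L/(2*(1+b)))
    have hb' : (1:ℝ)+b ≠ 0 := ne_of_gt hb
    have hval : f pA - f (pA + L/(2*(1+b))) = -(L^2) / (4*(1+b)*D) := by
      rw [hd]; field_simp; ring
    have hineq : (0:ℝ) ≤ -(L^2) / (4*(1+b)*D) := by
      rw [← hval]; linarith
    have hpos : (0:ℝ) < 4*(1+b)*D := by positivity
    have hL2 : L^2 ≤ 0 := by
      by_contra hc
      push_neg at hc
      have : -(L^2) / (4*(1+b)*D) < 0 := div_neg_of_neg_of_pos (by linarith) hpos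
      linarith
    have : L^2 = 0 := le_antisymm hL2 (sq_nonneg L)
    exact sq_eq_zero_iff.mp this
  · intro hL q
    have hd := hdiff q
    rw [hL] at hd
    have hd' : f pA - f q = ((1+b)*(pA-q)^2)/D := by rw [hd]; ring
    have : (0:ℝ) ≤ ((1+b)*(pA-q)^2)/D := by positivity
    linarith

/-- The Bertrand game has a unique Nash equilibrium in prices, and the resulting
equilibrium outputs are given by the stated rational expressions. -/
theorem bertrand_equilibrium_outputs (a b cA cC : ℝ) (hb0 : 0 < b) (hb1 : b < 1) :
    (∃! p : ℝ × ℝ × ℝ, BertrandNash a b cA cC p) ∧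
    (∀ p : ℝ × ℝ × ℝ, BertrandNash a b cA cC p →
      xdA a b p.1 p.2.1 p.2.2 =
        (2 * b ^ 2 * cC + b * cC + 3 * b ^ 2 * cA - 2 * b * cA - 4 * cA - 5 * a * b ^ 2
          + a * b + 4 * a) / ((1 - b) * (b + 2) * (5 * b + 4)) ∧
      xdB a b p.1 p.2.1 p.2.2 =
        (2 * b ^ 2 * cC + b * cC + 3 * b ^ 2 * cA - 2 * b * cA - 4 * cA - 5 * a * b ^ 2
          + a * b + 4 * a) / ((1 - b) * (b + 2) * (5 * b + 4)) ∧
      xdC a b p.1 p.2.1 p.2.2 =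
        (b ^ 2 * cC - 3 * b * cC - 4 * cC + 4 * b ^ 2 * cA + 2 * b * cA - 5 * a * b ^ 2
          + a * b + 4 * a) / ((1 - b) * (b + 2) * (5 * b + 4))) := by
  have h1 : (1:ℝ) - b ≠ 0 := by intro h; nlinarith
  have h2 : (1:ℝ) + 2*b ≠ 0 := by nlinarith
  have h1b : (0:ℝ) < 1 + b := by linarith
  have hD : (0:ℝ) < (1-b)*(1+2*b) := by nlinarith
  have hK : ((5:ℝ)*b+4)*(b+2) ≠ 0 := by nlinarith
  have h45 : (4:ℝ)+5*b ≠ 0 := by nlinarith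
  -- characterization of Nash equilibria
  have hiff : ∀ p : ℝ × ℝ × ℝ, BertrandNash a b cA cC p ↔
      p = (bepAB a b cA cC, bepAB a b cA cC, bepC a b cA cC) := by
    intro p
    obtain ⟨pA, pB, pC⟩ := p
    have hfA : (∀ q, bpsiA a b cA cC q pB pC ≤ bpsiA a b cA cC pA pB pC) ↔
        (1-b)*a - 2*(1+b)*pA + b/2*(pB+pC) + (1+b)*cA + b/2*(cA+cC) = 0 :=
      foc_iff h1b hD (fun q => diff_A a b cA cC pA pB pC q h1 h2)
    have hfB : (∀ q, bpsiB a b cA cC pA q pC ≤ bpsiB a b cA cC pA pB pC) ↔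
        (1-b)*a - 2*(1+b)*pB + b/2*(pA+pC) + (1+b)*cA + b/2*(cA+cC) = 0 :=
      foc_iff h1b hD (fun q => diff_B a b cA cC pA pB pC q h1 h2)
    have hfC : (∀ q, bpsiC a b cA cC pA pB q ≤ bpsiC a b cA cC pA pB pC) ↔
        (1-b)*a - 2*(1+b)*pC + b/2*(pA+pB) + (1+b)*cC + b*cA = 0 :=
      foc_iff h1b hD (fun q => diff_C a b cA cC pA pB pC q h1 h2)
    constructor
    · rintro ⟨hA, hB, hC⟩
      have eA := hfA.mp hA
      have eB := hfB.mp hB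
      have eC := hfC.mp hC
      have hAB : pA = pB := by
        have h0 : (4+5*b)*(pA - pB) = 0 := by linear_combination (-2:ℝ)*eA + 2*eB
        rcases mul_eq_zero.mp h0 with h | h
        · exact absurd h h45
        · linarith
      rw [← hAB] at eA eC
      have hpA : pA = bepAB a b cA cC := by
        unfold bepAB
        rw [eq_div_iff hK]
        linear_combination (-4*(1+b))*eA + (-b)*eC
      have hpC : pC = bepC a b cA cC := by
        unfold bepC
        rw [eq_div_iff hK]
        linear_combination (-2*b)*eA + (-(4+3*b))*eC
      simp only [Prod.mk.injEq]
      exact ⟨hpA, hAB ▸ hpA, hpC⟩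
    · intro h
      rw [Prod.mk.injEq, Prod.mk.injEq] at h
      obtain ⟨hA', hB', hC'⟩ := h
      subst hA'; subst hB'; subst hC'
      refine ⟨hfA.mpr ?_, hfB.mpr ?_, hfC.mpr ?_⟩ <;>
        · unfold bepAB bepC
          field_simp
          ring
  refine ⟨⟨(bepAB a b cA cC, bepAB a b cA cC, bepC a b cA cC), (hiff _).mpr rfl,
      fun p hp => (hiff p).mp hp⟩, ?_⟩
  intro p hp
  have hp' := (hiff p).mp hp
  subst hp'
  have hden : ((1:ℝ)-b)*(b+2)*(5*b+4) ≠ 0 := by nlinarith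
  refine ⟨?_, ?_, ?_⟩ <;>
    · simp only [xdA, xdB, xdC, bepAB, bepC]
      rw [div_eq_div_iff (by nlinarith) hden]
      field_simp
      ring
end

section
/- Pattern 1 (all firms choose quantities) and Pattern 3 (firms A and C choose quantities, firm B chooses its price) have different equilibrium values of x_A whenever c_C ≠ c_A: the Pattern 3 equilibrium x_A = (5b²c_C + 4b·c_C - 3b³c_A + 6b²c_A + 4b·c_A - 16c_A + 3ab³ - 11ab² - 8ab + 16a)/((4-b)(1-b)(b+2)(3b+4)) differs from the Pattern 1 equilibrium x_A = (b·c_C - 4c_A - ab + 4a)/((4-b)(b+2)) for 0 < b < 1 unless c_C = c_A. -/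
/-- The Pattern 3 equilibrium value of x_A equals the Pattern 1 equilibrium value of x_A
if and only if c_C = c_A (for 0 < b < 1). -/
theorem pattern3_xA_eq_pattern1_xA_iff (a b cA cC : ℝ) (hb0 : 0 < b) (hb1 : b < 1) :
    (5 * b ^ 2 * cC + 4 * b * cC - 3 * b ^ 3 * cA + 6 * b ^ 2 * cA + 4 * b * cA - 16 * cA
        + 3 * a * b ^ 3 - 11 * a * b ^ 2 - 8 * a * b + 16 * a) /
      ((4 - b) * (1 - b) * (b + 2) * (3 * b + 4)) =
      (b * cC - 4 * cA - a * b + 4 * a) / ((4 - b) * (b + 2))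
    ↔ cC = cA := by
  have h4 : (4 : ℝ) - b ≠ 0 := by linarith
  have h1 : (1 : ℝ) - b ≠ 0 := by linarith
  have h2 : b + 2 ≠ 0 := by linarith
  have h3 : 3 * b + 4 ≠ 0 := by linarith
  rw [div_eq_div_iff (by positivity) (by positivity)]
  constructor
  · intro h
    have key : (3 * b ^ 2 * (b + 2) * (4 - b) * (b + 2)) * (cC - cA) = 0 := by
      linear_combination h
    have hnz : (3 * b ^ 2 * (b + 2) * (4 - b) * (b + 2)) ≠ 0 := by positivity
    have := (mul_eq_zero.mp key).resolve_left hnz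
    linarith
  · intro h
    subst h
    ring
end

section
/- Pattern 6 (all firms choose prices) and Pattern 5 (firms A and C choose prices, firm B chooses its quantity) have different equilibrium values of x_A unless c_C = c_A: for 0 < b < 1, (3b²c_C - b³c_C + 4b·c_C + 6b³c_A + 16b²c_A - 12b·c_A - 16c_A - 5ab³ - 19ab² + 8ab + 16a)/((1-b)(b+2)(b+4)(5b+4)) equals (2b²c_C + b·c_C + 3b²c_A - 2b·c_A - 4c_A - 5ab² + ab + 4a)/((1-b)(b+2)(5b+4)) if and only if c_C = c_A. -/
/-- The Pattern 5 equilibrium value of x_A equals the Pattern 6 (Bertrand) equilibrium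
value of x_A if and only if c_C = c_A (for 0 < b < 1). -/
theorem pattern5_xA_eq_pattern6_xA_iff (a b cA cC : ℝ) (hb0 : 0 < b) (hb1 : b < 1) :
    (3 * b ^ 2 * cC - b ^ 3 * cC + 4 * b * cC + 6 * b ^ 3 * cA + 16 * b ^ 2 * cA
        - 12 * b * cA - 16 * cA - 5 * a * b ^ 3 - 19 * a * b ^ 2 + 8 * a * b + 16 * a) /
      ((1 - b) * (b + 2) * (b + 4) * (5 * b + 4)) =
      (2 * b ^ 2 * cC + b * cC + 3 * b ^ 2 * cA - 2 * b * cA - 4 * cA - 5 * a * b ^ 2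
        + a * b + 4 * a) / ((1 - b) * (b + 2) * (5 * b + 4))
    ↔ cC = cA := by
  have h1 : (0:ℝ) < 1 - b := by linarith
  have h2 : (0:ℝ) < b + 2 := by linarith
  have h3 : (0:ℝ) < b + 4 := by linarith
  have h4 : (0:ℝ) < 5 * b + 4 := by linarith
  have hd1 : (1 - b) * (b + 2) * (b + 4) * (5 * b + 4) ≠ 0 :=
    (mul_pos (mul_pos (mul_pos h1 h2) h3) h4).ne'
  have hd2 : (1 - b) * (b + 2) * (5 * b + 4) ≠ 0 :=
    (mul_pos (mul_pos h1 h2) h4).ne'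
  rw [div_eq_div_iff hd1 hd2]
  constructor
  · intro h
    have hX : (0:ℝ) < (1 - b) * (b + 2) * (5 * b + 4) * (3 * b ^ 2 * (b + 2)) := by
      apply mul_pos (mul_pos (mul_pos h1 h2) h4)
      have := sq_nonneg b
      nlinarith
    have key : (1 - b) * (b + 2) * (5 * b + 4) * (3 * b ^ 2 * (b + 2)) * (cA - cC) = 0 := by
      linear_combination h
    have := (mul_eq_zero.mp key).resolve_left hX.ne'
    linarith
  · intro h
    subst h
    ring
end
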